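/- In a Q-metric space (X,d) over a continuous quantale, a subset O ⊆ X is open in the open ball topology τ_d if and only if for every x ∈ O there exists δ ≪ 1 such that B(x,δ) ⊆ O. In particular the open balls form a base for τ_d. -/

import Mathlib

def wayBelow {Q : Type*} [CompleteLattice Q] (x y : Q) : Prop :=
  ∀ D : Set Q, D.Nonempty → DirectedOn (· ≤ ·) D → y ≤ sSup D → ∃ d ∈ D, x ≤ d

def ContinuousLattice (Q : Type*) [CompleteLattice Q] : Prop :=
  ∀ y : Q, y = sSup {x : Q | wayBelow x y}

/-- Open ball for a quantale-valued metric. -/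
def ball {Q : Type*} [CompleteLattice Q] {X : Type*} (d : X → X → Q) (x : X) (δ : Q) :
    Set X := {y : X | wayBelow δ (d x y)}

/-- The open ball topology. -/
def ballTopology {Q : Type*} [Monoid Q] [CompleteLattice Q] {X : Type*}
    (d : X → X → Q) : TopologicalSpace X :=
  TopologicalSpace.generateFrom {B : Set X | ∃ x δ, wayBelow δ (1 : Q) ∧ B = ball d x δ}

/-! Balls are open: given `y ∈ B(x, δ)`, interpolate `δ ≪ β ≪ d(x, y)`. Since
`d(x, y) = d(x, y) ⊗ 1 = ⋁_{ε ≪ 1} d(x, y) ⊗ ε` is a directed join, `β ≤ d(x, y) ⊗ ε` for some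
`ε ≪ 1`, and the triangle inequality gives `B(y, ε) ⊆ B(x, δ)`. Shrinking radii by joins, the balls
therefore form a base of `τ_d`. -/

section WayBelow

variable {Q : Type*} [CompleteLattice Q] {a b y : Q}

theorem wayBelow_bot (y : Q) : wayBelow ⊥ y := fun _ ⟨c, hc⟩ _ _ => ⟨c, hc, bot_le⟩

theorem wayBelow.le (h : wayBelow a y) : a ≤ y := by
  obtain ⟨c, rfl, hac⟩ := h {y} (Set.singleton_nonempty y) (directedOn_singleton y) (by simp)
  exact hac

theorem wayBelow_of_le_of_wayBelow (hab : a ≤ b) (h : wayBelow b y) : wayBelow a y :=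
  fun D hne hD hy => (h D hne hD hy).imp fun _ => And.imp_right hab.trans

theorem wayBelow.trans_le {y' : Q} (h : wayBelow a y) (hy : y ≤ y') : wayBelow a y' :=
  fun D hne hD hy' => h D hne hD (hy.trans hy')

theorem wayBelow.sup (ha : wayBelow a y) (hb : wayBelow b y) : wayBelow (a ⊔ b) y := by
  intro D hne hD hy
  obtain ⟨c, hc, hac⟩ := ha D hne hD hy
  obtain ⟨c', hc', hbc'⟩ := hb D hne hD hy
  obtain ⟨e, he, hce, hc'e⟩ := hD c hc c' hc'
  exact ⟨e, he, sup_le (hac.trans hce) (hbc'.trans hc'e)⟩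

theorem ContinuousLattice.exists_wayBelow_wayBelow (hcont : ContinuousLattice Q)
    (h : wayBelow a y) : ∃ b, wayBelow a b ∧ wayBelow b y := by
  let S : Set Q := {c | ∃ b, wayBelow c b ∧ wayBelow b y}
  have hS_dir : DirectedOn (· ≤ ·) S :=
    directedOn_of_sup_mem fun c c' ⟨b, hcb, hby⟩ ⟨b', hcb', hb'y⟩ =>
      ⟨b ⊔ b', (hcb.trans_le le_sup_left).sup (hcb'.trans_le le_sup_right), hby.sup hb'y⟩
  -- Every `b ≪ y` is the join of the `c ≪ b`, all of which lie in `S`.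
  have hy : y ≤ sSup S := by
    rw [hcont y]
    refine sSup_le fun b hby => ?_
    rw [hcont b]
    exact sSup_le fun c hcb => le_sSup ⟨b, hcb, hby⟩
  obtain ⟨c, ⟨b, hcb, hby⟩, hac⟩ := h S ⟨⊥, ⊥, wayBelow_bot _, wayBelow_bot _⟩ hS_dir hy
  exact ⟨b, wayBelow_of_le_of_wayBelow hac hcb, hby⟩

end WayBelow

theorem ContinuousLattice.exists_wayBelow_one_le_mul {Q : Type*} [Monoid Q] [CompleteLattice Q]
    [IsQuantale Q] (hcont : ContinuousLattice Q) {a b : Q} (h : wayBelow b a) :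
    ∃ ε, wayBelow ε 1 ∧ b ≤ a * ε := by
  let W : Set Q := {ε | wayBelow ε 1}
  have hW_dir : DirectedOn (· ≤ ·) W := directedOn_of_sup_mem fun _ _ => wayBelow.sup
  have ha : a ≤ sSup ((a * ·) '' W) := by
    rw [sSup_image, ← mul_sSup_distrib, ← hcont 1, mul_one]
  obtain ⟨_, ⟨ε, hε, rfl⟩, hbε⟩ := h _ (Set.image_nonempty.mpr ⟨⊥, wayBelow_bot 1⟩)
    (hW_dir.mono_comp fun _ _ hle => mul_le_mul_right hle a) ha
  exact ⟨ε, hε, hbε⟩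

section Ball

variable {Q : Type*} [CompleteLattice Q] {X : Type*} {d : X → X → Q} {x : X}

theorem ball_subset_ball {δ δ' : Q} (h : δ ≤ δ') : ball d x δ' ⊆ ball d x δ :=
  fun _ => wayBelow_of_le_of_wayBelow h

theorem mem_ball_self [One Q] (hrefl : ∀ x : X, (1 : Q) ≤ d x x) {δ : Q} (hδ : wayBelow δ 1) :
    x ∈ ball d x δ :=
  hδ.trans_le (hrefl x)

theorem exists_ball_subset_ball [Monoid Q] [IsQuantale Q] (hcont : ContinuousLattice Q)
    (htri : ∀ x y z : X, d x y * d y z ≤ d x z) {y : X} {δ : Q} (hy : y ∈ ball d x δ) :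
    ∃ ε, wayBelow ε 1 ∧ ball d y ε ⊆ ball d x δ := by
  obtain ⟨β, hδβ, hβ⟩ := hcont.exists_wayBelow_wayBelow hy
  obtain ⟨ε, hε, hβε⟩ := hcont.exists_wayBelow_one_le_mul hβ
  refine ⟨ε, hε, fun z hz => hδβ.trans_le ?_⟩
  calc β ≤ d x y * ε := hβε
    _ ≤ d x y * d y z := mul_le_mul_right hz.le _
    _ ≤ d x z := htri x y z

theorem isTopologicalBasis_ball [Monoid Q] [IsQuantale Q] (hcont : ContinuousLattice Q)
    (hrefl : ∀ x : X, (1 : Q) ≤ d x x) (htri : ∀ x y z : X, d x y * d y z ≤ d x z) :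
    @TopologicalSpace.IsTopologicalBasis X (ballTopology d)
      {B | ∃ x δ, wayBelow δ (1 : Q) ∧ B = ball d x δ} := by
  refine @TopologicalSpace.IsTopologicalBasis.mk X (ballTopology d) _ ?_
    (Set.eq_univ_of_forall fun x => ?_) rfl
  · rintro _ ⟨y₁, δ₁, -, rfl⟩ _ ⟨y₂, δ₂, -, rfl⟩ x ⟨hx₁, hx₂⟩
    obtain ⟨ε₁, hε₁, hsub₁⟩ := exists_ball_subset_ball hcont htri hx₁
    obtain ⟨ε₂, hε₂, hsub₂⟩ := exists_ball_subset_ball hcont htri hx₂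
    refine ⟨ball d x (ε₁ ⊔ ε₂), ⟨x, _, hε₁.sup hε₂, rfl⟩, mem_ball_self hrefl (hε₁.sup hε₂), ?_⟩
    exact Set.subset_inter ((ball_subset_ball le_sup_left).trans hsub₁)
      ((ball_subset_ball le_sup_right).trans hsub₂)
  · exact ⟨ball d x ⊥, ⟨x, ⊥, wayBelow_bot 1, rfl⟩, mem_ball_self hrefl (wayBelow_bot 1)⟩

end Ball

theorem ballTopology_isOpen_iff {Q : Type*} [Monoid Q] [CompleteLattice Q] [IsQuantale Q]
    (hcont : ContinuousLattice Q) {X : Type*} (d : X → X → Q)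
    (hrefl : ∀ x : X, (1 : Q) ≤ d x x)
    (htri : ∀ x y z : X, d x y * d y z ≤ d x z) (O : Set X) :
    (ballTopology d).IsOpen O ↔
      ∀ x ∈ O, ∃ δ : Q, wayBelow δ (1 : Q) ∧ ball d x δ ⊆ O := by
  refine (@TopologicalSpace.IsTopologicalBasis.isOpen_iff X (ballTopology d) O _
    (isTopologicalBasis_ball hcont hrefl htri)).trans ?_
  refine forall₂_congr fun x _ => ⟨?_, fun ⟨δ, hδ, hsub⟩ => ?_⟩
  · rintro ⟨_, ⟨y, δ, -, rfl⟩, hx, hsub⟩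
    obtain ⟨ε, hε, hball⟩ := exists_ball_subset_ball hcont htri hx
    exact ⟨ε, hε, hball.trans hsub⟩
  · exact ⟨ball d x δ, ⟨x, δ, hδ, rfl⟩, mem_ball_self hrefl hδ, hsub⟩
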